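/- With the definitions of C, O_ℓ, U_ℓ, D and T made from the run of BinarySearchMechanism(N \ {i}, M, ψ) with fixed rounds r_{−i}, the following holds in the actual mechanism BinarySearchMechanism(N, M, ψ) with bidder i included: E_{r*, r_i}[Rev(S_i*) | r_{−i}] ≥ (1/(β+1)²)·q(T), where Rev refers to the FixedPriceAuction that produced the final allocation and q(T) = Σ_{e∈T} q_e. -/

import Mathlib

open Finset

variable {ι : Type} [Fintype ι] [DecidableEq ι] {B : Type} [DecidableEq B]

/-- Sum of the prices of the items in `S`. -/
def priceOf (p : ι → ℝ) (S : Finset ι) : ℝ := ∑ e ∈ S, p e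

/-- A (normalized, monotone) valuation. -/
def IsValuation (v : Finset ι → ℝ) : Prop :=
  v ∅ = 0 ∧ ∀ S T : Finset ι, S ⊆ T → v S ≤ v T

/-- A subadditive set function. -/
def SubadditiveVal (v : Finset ι → ℝ) : Prop :=
  ∀ S T : Finset ι, v (S ∪ T) ≤ v S + v T

/-- `D` is a demand oracle for valuation `v` at prices `p`: on any set `R` of available
items it returns a subset of `R` maximizing utility. -/
def IsDemandOracle (v : Finset ι → ℝ) (p : ι → ℝ) (D : Finset ι → Finset ι) : Prop :=
  ∀ R : Finset ι, D R ⊆ R ∧ ∀ T ⊆ R, v T - priceOf p T ≤ v (D R) - priceOf p (D R)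

/-- The bundle received by bidder `i` in the fixed price auction processing the ordered
list `L` of bidders with available items `R`, where bidder `j` uses demand oracle `Dem j`. -/
def FPAalloc (Dem : B → Finset ι → Finset ι) : List B → Finset ι → B → Finset ι
  | [], _, _ => ∅
  | j :: L, R, i => if i = j then Dem j R else FPAalloc Dem L (R \ Dem j R) i

/-- The set of items allocated (to some bidder) in the fixed price auction. -/
def FPAsold (Dem : B → Finset ι → Finset ι) : List B → Finset ι → Finset ι
  | [], _ => ∅
  | j :: L, R => Dem j R ∪ FPAsold Dem L (R \ Dem j R)

/-- The candidate price set `B = {0} ∪ {2^(j-K)·ψ : j = 0,…,K-1}` where `K = 3⌈log₂ m⌉`. -/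
def candB (m : ℕ) (ψ : ℝ) : Set ℝ :=
  insert 0 {x : ℝ | ∃ j < 3 * Nat.clog 2 m, x = 2 ^ j * ψ / 2 ^ (3 * Nat.clog 2 m)}

/-- Bidder with valuation `v` satisfies the `α`-price guarantee on `U`. -/
def PriceGuarantee (v : Finset ι → ℝ) (U : Finset ι) (α : ℝ) : Prop :=
  ∃ (lam : Finset ι → ℝ) (q : ι → ℝ),
    (∀ S, 0 ≤ lam S) ∧ (∑ S ∈ U.powerset, lam S = 1) ∧ (∀ e ∈ U, 0 ≤ q e) ∧
    ∀ T ⊆ U, (1 / α) * v U - priceOf q T ≤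
      ∑ S ∈ U.powerset, lam S * (v (S \ T) - priceOf q S)

/-- The group of bidders participating in round `ℓ` (in the order of `N`). -/
def BSMgroup (N : List B) (r : B → ℕ) (ℓ : ℕ) : List B := N.filter fun i => r i = ℓ

/-- The offset (into the sorted vector `b` of `2^β` candidate prices) of the block of
remaining candidate prices of each item at the beginning of round `ℓ` (rounds are
`0`-indexed: the binary search rounds are `0,…,β-1` and the final round is `β`). -/
def BSMoff (Dem : B → (ι → ℝ) → Finset ι → Finset ι) (N : List B) (r : B → ℕ)
    (b : ℕ → ℝ) (β : ℕ) : ℕ → ι → ℕ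
  | 0, _ => 0
  | ℓ + 1, e =>
    if e ∈ FPAsold
        (fun i => Dem i fun e' => b (BSMoff Dem N r b β ℓ e' + 2 ^ (β - ℓ - 1)))
        (BSMgroup N r ℓ) Finset.univ
    then BSMoff Dem N r b β ℓ e + 2 ^ (β - ℓ - 1)
    else BSMoff Dem N r b β ℓ e

/-- The price vector used in round `ℓ` of the binary search mechanism: for `ℓ < β` the
middle entry of the remaining block of candidate prices, and for the final round `β`
the unique remaining candidate price. -/
def BSMprice (Dem : B → (ι → ℝ) → Finset ι → Finset ι) (N : List B) (r : B → ℕ)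
    (b : ℕ → ℝ) (β ℓ : ℕ) : ι → ℝ :=
  fun e =>
    if ℓ < β then b (BSMoff Dem N r b β ℓ e + 2 ^ (β - ℓ - 1))
    else b (BSMoff Dem N r b β β e)

/-- The bundle received by bidder `i` in the final allocation of the binary search
mechanism when the final allocation round is `ℓstar`. -/
def BSMfinalAlloc (Dem : B → (ι → ℝ) → Finset ι → Finset ι) (N : List B) (r : B → ℕ)
    (b : ℕ → ℝ) (β ℓstar : ℕ) (i : B) : Finset ι :=
  FPAalloc (fun j => Dem j (BSMprice Dem N r b β ℓstar)) (BSMgroup N r ℓstar) Finset.univ i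

/-- The welfare of the final allocation of the binary search mechanism. -/
def BSMwelfare (v : B → Finset ι → ℝ) (Dem : B → (ι → ℝ) → Finset ι → Finset ι)
    (N : List B) (r : B → ℕ) (b : ℕ → ℝ) (β ℓstar : ℕ) : ℝ :=
  ((BSMgroup N r ℓstar).map fun i => v i (BSMfinalAlloc Dem N r b β ℓstar i)).sum

/-- The set of items sold in the fixed price auction of round `ℓ`. -/
def BSMsold (Dem : B → (ι → ℝ) → Finset ι → Finset ι) (N : List B) (r : B → ℕ)
    (b : ℕ → ℝ) (β ℓ : ℕ) : Finset ι :=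
  FPAsold (fun j => Dem j (BSMprice Dem N r b β ℓ)) (BSMgroup N r ℓ) Finset.univ

/-- The revenue obtained from the items of `S` in the final allocation (round `ℓstar`). -/
def BSMrev (Dem : B → (ι → ℝ) → Finset ι → Finset ι) (N : List B) (r : B → ℕ)
    (b : ℕ → ℝ) (β : ℕ) (S : Finset ι) (ℓstar : ℕ) : ℝ :=
  priceOf (BSMprice Dem N r b β ℓstar) (S ∩ BSMsold Dem N r b β ℓstar)

/-- The utility of bidder `i` in the final allocation (zero if `i` does not take part in
the fixed price auction that produced the final allocation). -/
def BSMutility (v : B → Finset ι → ℝ) (Dem : B → (ι → ℝ) → Finset ι → Finset ι)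
    (N : List B) (r : B → ℕ) (b : ℕ → ℝ) (β : ℕ) (i : B) (ℓstar : ℕ) : ℝ :=
  if r i = ℓstar then
    v i (BSMfinalAlloc Dem N r b β ℓstar i)
      - priceOf (BSMprice Dem N r b β ℓstar) (BSMfinalAlloc Dem N r b β ℓstar i)
  else 0

open scoped Classical

/-- Item `e` is *oversold* at round `ℓ` (w.r.t. the intended prices `q`): it is allocated
in the round-`ℓ` fixed price auction although its round-`ℓ` price exceeds `q e`. -/
def OverAt (Dem : B → (ι → ℝ) → Finset ι → Finset ι) (N : List B) (r : B → ℕ)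
    (b : ℕ → ℝ) (β : ℕ) (q : ι → ℝ) (ℓ : ℕ) (e : ι) : Prop :=
  e ∈ BSMsold Dem N r b β ℓ ∧ q e < BSMprice Dem N r b β ℓ e

/-- Item `e` is *undersold* at round `ℓ`: it is not allocated in the round-`ℓ` fixed
price auction although its round-`ℓ` price is at most `q e`. -/
def UnderAt (Dem : B → (ι → ℝ) → Finset ι → Finset ι) (N : List B) (r : B → ℕ)
    (b : ℕ → ℝ) (β : ℕ) (q : ι → ℝ) (ℓ : ℕ) (e : ι) : Prop :=
  e ∉ BSMsold Dem N r b β ℓ ∧ BSMprice Dem N r b β ℓ e ≤ q e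

/-- `O_ℓ`: the items of `Sstar` for which `ℓ` is the smallest round at which they are
allocated at a price exceeding their intended price. -/
noncomputable def Oset (Dem : B → (ι → ℝ) → Finset ι → Finset ι) (N : List B) (r : B → ℕ)
    (b : ℕ → ℝ) (β : ℕ) (q : ι → ℝ) (Sstar : Finset ι) (ℓ : ℕ) : Finset ι :=
  Sstar.filter fun e =>
    OverAt Dem N r b β q ℓ e ∧ ∀ ℓ' < ℓ, ¬ OverAt Dem N r b β q ℓ' e

/-- `U_ℓ`: the items of `Sstar` for which `ℓ` is the smallest round at which they remain
unallocated at a price of at most their intended price. -/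
noncomputable def Uset (Dem : B → (ι → ℝ) → Finset ι → Finset ι) (N : List B) (r : B → ℕ)
    (b : ℕ → ℝ) (β : ℕ) (q : ι → ℝ) (Sstar : Finset ι) (ℓ : ℕ) : Finset ι :=
  Sstar.filter fun e =>
    UnderAt Dem N r b β q ℓ e ∧ ∀ ℓ' < ℓ, ¬ UnderAt Dem N r b β q ℓ' e

/-- `C`: the items of `Sstar` whose final (round `β`) price equals their intended price. -/
noncomputable def Cset (Dem : B → (ι → ℝ) → Finset ι → Finset ι) (N : List B) (r : B → ℕ)
    (b : ℕ → ℝ) (β : ℕ) (q : ι → ℝ) (Sstar : Finset ι) : Finset ι :=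
  Sstar.filter fun e => BSMprice Dem N r b β β e = q e

/-- `D`: the items of `C` that, in the final-round fixed price auction, are allocated to
bidders satisfying `P` (the bidders preceding the distinguished bidder in the order of
`N`; these form a prefix of the final group). -/
noncomputable def Dset (Dem : B → (ι → ℝ) → Finset ι → Finset ι) (N : List B) (r : B → ℕ)
    (b : ℕ → ℝ) (β : ℕ) (q : ι → ℝ) (Sstar : Finset ι) (P : B → Prop) : Finset ι :=
  (Cset Dem N r b β q Sstar).filter fun e =>
    e ∈ FPAsold (fun j => Dem j (BSMprice Dem N r b β β))
        ((BSMgroup N r β).filter fun j => P j) Finset.univ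

/-- `T = O_1 ∪ ⋯ ∪ O_β ∪ D`. -/
noncomputable def Tset (Dem : B → (ι → ℝ) → Finset ι → Finset ι) (N : List B) (r : B → ℕ)
    (b : ℕ → ℝ) (β : ℕ) (q : ι → ℝ) (Sstar : Finset ι) (P : B → Prop) : Finset ι :=
  (Finset.range β).biUnion (Oset Dem N r b β q Sstar) ∪ Dset Dem N r b β q Sstar P

/-! Put the distinguished bidder `i` in the final round, `r_i = β` (rounds are `0`-indexed).
Rounds `0, …, β - 1` are then run by exactly the bidders of the mechanism without `i`, so
prices and allocations coincide with that run, and in round `ℓ` every item of `O_ℓ` is sold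
at a price above `q_e`. The final prices coincide too, and the bidders preceding `i` form a
prefix of the final group, so they buy what they bought without `i`: every item of `D` is
sold at its price `q_e`. Summing over `r*`, the revenue for `r_i = β` is at least `q(T)`;
all revenues being nonnegative, this single value of `r_i` already gives the bound. -/

section PriceSums

variable {ι κ : Type} [DecidableEq ι] {p : ι → ℝ}

theorem priceOf_union_le {A C : Finset ι} (h : ∀ e ∈ A ∩ C, 0 ≤ p e) :
    priceOf p (A ∪ C) ≤ priceOf p A + priceOf p C := by
  have hsplit := Finset.sum_union_inter (s₁ := A) (s₂ := C) (f := p)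
  have hinter := Finset.sum_nonneg h
  unfold priceOf
  linarith

theorem priceOf_biUnion_le {s : Finset κ} {A : κ → Finset ι}
    (h : ∀ e ∈ s.biUnion A, 0 ≤ p e) :
    priceOf p (s.biUnion A) ≤ ∑ k ∈ s, priceOf p (A k) := by
  induction s using Finset.induction_on with
  | empty => simp [priceOf]
  | insert k s hk ih =>
    rw [Finset.biUnion_insert] at h ⊢
    rw [Finset.sum_insert hk]
    calc priceOf p (A k ∪ s.biUnion A) ≤ priceOf p (A k) + priceOf p (s.biUnion A) :=
          priceOf_union_le fun e he => h e (Finset.mem_union_left _ (Finset.mem_inter.1 he).1)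
      _ ≤ priceOf p (A k) + ∑ k ∈ s, priceOf p (A k) := by
          gcongr
          exact ih fun e he => h e (Finset.mem_union_right _ he)

end PriceSums

theorem List.Pairwise.filter_isPrefix {α : Type*} {R : α → α → Prop} {p : α → Bool}
    {L : List α} (hL : L.Pairwise R) (hp : ∀ a b, R a b → p b → p a) :
    L.filter p <+: L := by
  induction L with
  | nil => simp
  | cons x L ih =>
    obtain ⟨hx, hL⟩ := List.pairwise_cons.1 hL
    by_cases hpx : p x
    · simpa [List.filter_cons, hpx] using ih hL
    · have hnil : (x :: L).filter p = [] := by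
        rw [List.filter_eq_nil_iff]
        rintro a (_ | ⟨_, ha⟩)
        · exact hpx
        · exact fun hpa => hpx (hp x a (hx a ha) hpa)
      rw [hnil]
      exact List.nil_prefix

theorem FPAsold_subset_of_isPrefix {ι κ : Type} [DecidableEq ι] (Dem : κ → Finset ι → Finset ι)
    {L₁ L₂ : List κ} (h : L₁ <+: L₂) (R : Finset ι) :
    FPAsold Dem L₁ R ⊆ FPAsold Dem L₂ R := by
  obtain ⟨L, rfl⟩ := h
  induction L₁ generalizing R with
  | nil => simp [FPAsold]
  | cons j L₁ ih =>
    simp only [List.cons_append, FPAsold]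
    exact Finset.union_subset_union_right (ih _)

section BinarySearch

variable {ι κ : Type} [Fintype ι] [DecidableEq ι]
  (Dem : κ → (ι → ℝ) → Finset ι → Finset ι) (b : ℕ → ℝ) (β : ℕ)

theorem BSMoff_add_two_pow_le (N : List κ) (r : κ → ℕ) {ℓ : ℕ} (hℓ : ℓ ≤ β) (e : ι) :
    BSMoff Dem N r b β ℓ e + 2 ^ (β - ℓ) ≤ 2 ^ β := by
  induction ℓ with
  | zero => simp [BSMoff]
  | succ ℓ ih =>
    have hpow := Nat.two_pow_pred_add_two_pow_pred (w := β - ℓ) (by omega)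
    have hstep : BSMoff Dem N r b β (ℓ + 1) e ≤ BSMoff Dem N r b β ℓ e + 2 ^ (β - ℓ - 1) := by
      simp only [BSMoff]
      split
      · exact le_rfl
      · exact Nat.le_add_right _ _
    have := ih (by omega)
    rw [Nat.sub_add_eq]
    omega

theorem BSMprice_mem (N : List κ) (r : κ → ℕ) (ℓ : ℕ) (e : ι) :
    ∃ j < 2 ^ β, BSMprice Dem N r b β ℓ e = b j := by
  unfold BSMprice
  split_ifs with hℓ
  · refine ⟨_, ?_, rfl⟩
    have hle := BSMoff_add_two_pow_le Dem b β N r hℓ.le e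
    have hpow := Nat.two_pow_pred_add_two_pow_pred (w := β - ℓ) (by omega)
    have hpos : 0 < 2 ^ (β - ℓ - 1) := by positivity
    omega
  · refine ⟨_, ?_, rfl⟩
    have hle := BSMoff_add_two_pow_le Dem b β N r le_rfl e
    rw [Nat.sub_self, pow_zero] at hle
    omega

variable {b β}

theorem BSMprice_nonneg (hb : ∀ j < 2 ^ β, 0 ≤ b j) (N : List κ) (r : κ → ℕ) (ℓ : ℕ) (e : ι) :
    0 ≤ BSMprice Dem N r b β ℓ e := by
  obtain ⟨j, hj, hprice⟩ := BSMprice_mem Dem b β N r ℓ e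
  exact hprice ▸ hb j hj

theorem BSMrev_nonneg (hb : ∀ j < 2 ^ β, 0 ≤ b j) (N : List κ) (r : κ → ℕ) (S : Finset ι)
    (ℓ : ℕ) : 0 ≤ BSMrev Dem N r b β S ℓ :=
  Finset.sum_nonneg fun e _ => BSMprice_nonneg Dem hb N r ℓ e

theorem priceOf_le_BSMrev (hb : ∀ j < 2 ^ β, 0 ≤ b j) {N : List κ} {r : κ → ℕ} {q : ι → ℝ}
    {A S : Finset ι} {ℓ : ℕ} (hAS : A ⊆ S) (hsold : A ⊆ BSMsold Dem N r b β ℓ)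
    (hq : ∀ e ∈ A, q e ≤ BSMprice Dem N r b β ℓ e) :
    priceOf q A ≤ BSMrev Dem N r b β S ℓ :=
  calc priceOf q A ≤ priceOf (BSMprice Dem N r b β ℓ) A := Finset.sum_le_sum hq
    _ ≤ BSMrev Dem N r b β S ℓ :=
      Finset.sum_le_sum_of_subset_of_nonneg (Finset.subset_inter hAS hsold)
        fun e _ _ => BSMprice_nonneg Dem hb N r ℓ e

theorem BSMoff_congr {N N' : List κ} {r r' : κ → ℕ}
    (h : ∀ ℓ < β, BSMgroup N r ℓ = BSMgroup N' r' ℓ) :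
    ∀ ℓ ≤ β, BSMoff Dem N r b β ℓ = BSMoff Dem N' r' b β ℓ
  | 0, _ => rfl
  | ℓ + 1, hℓ => by
    funext e
    simp only [BSMoff, BSMoff_congr h ℓ (by omega), h ℓ (by omega)]

theorem BSMprice_congr {N N' : List κ} {r r' : κ → ℕ}
    (h : ∀ ℓ < β, BSMgroup N r ℓ = BSMgroup N' r' ℓ) (ℓ : ℕ) :
    BSMprice Dem N r b β ℓ = BSMprice Dem N' r' b β ℓ := by
  funext e
  unfold BSMprice
  split_ifs with hℓ
  · rw [BSMoff_congr Dem h ℓ hℓ.le]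
  · rw [BSMoff_congr Dem h β le_rfl]

theorem BSMsold_congr {N N' : List κ} {r r' : κ → ℕ}
    (h : ∀ ℓ < β, BSMgroup N r ℓ = BSMgroup N' r' ℓ) {ℓ : ℕ} (hℓ : ℓ < β) :
    BSMsold Dem N r b β ℓ = BSMsold Dem N' r' b β ℓ := by
  unfold BSMsold
  rw [BSMprice_congr Dem h, h ℓ hℓ]

end BinarySearch

section Coupling

variable {ι κ : Type} [Fintype ι] [DecidableEq ι] [DecidableEq κ]
  (Dem : κ → (ι → ℝ) → Finset ι → Finset ι) {b : ℕ → ℝ} {β : ℕ}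

theorem BSMgroup_update_of_ne (N : List κ) (r : κ → ℕ) (i : κ) {c ℓ : ℕ} (h : ℓ ≠ c) :
    BSMgroup N (Function.update r i c) ℓ = BSMgroup (N.filter (· ≠ i)) r ℓ := by
  unfold BSMgroup
  rw [List.filter_filter]
  refine List.filter_congr fun j _ => ?_
  by_cases hj : j = i
  · simp [hj, Ne.symm h]
  · simp [hj]

theorem BSMgroup_update_filter (N : List κ) (r : κ → ℕ) (i : κ) (c ℓ : ℕ) {p : κ → Bool}
    (hp : ∀ j, p j → j ≠ i) :
    (BSMgroup N (Function.update r i c) ℓ).filter p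
      = (BSMgroup (N.filter (· ≠ i)) r ℓ).filter p := by
  unfold BSMgroup
  simp only [List.filter_filter]
  refine List.filter_congr fun j _ => ?_
  by_cases hpj : p j
  · simp [hpj, hp j hpj]
  · simp [hpj]

theorem BSMprice_update_last (N : List κ) (r : κ → ℕ) (i : κ) (ℓ : ℕ) :
    BSMprice Dem N (Function.update r i β) b β ℓ = BSMprice Dem (N.filter (· ≠ i)) r b β ℓ :=
  BSMprice_congr Dem (fun _ hℓ => BSMgroup_update_of_ne N r i hℓ.ne) ℓ

theorem BSMsold_update_last (N : List κ) (r : κ → ℕ) (i : κ) {ℓ : ℕ} (hℓ : ℓ < β) :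
    BSMsold Dem N (Function.update r i β) b β ℓ = BSMsold Dem (N.filter (· ≠ i)) r b β ℓ :=
  BSMsold_congr Dem (fun _ hℓ => BSMgroup_update_of_ne N r i hℓ.ne) hℓ

theorem priceOf_Oset_le_BSMrev (hb : ∀ j < 2 ^ β, 0 ≤ b j) (N : List κ) (r : κ → ℕ) (i : κ)
    (q : ι → ℝ) (S : Finset ι) {ℓ : ℕ} (hℓ : ℓ < β) :
    priceOf q (Oset Dem (N.filter (· ≠ i)) r b β q S ℓ)
      ≤ BSMrev Dem N (Function.update r i β) b β S ℓ := by
  refine priceOf_le_BSMrev Dem hb (Finset.filter_subset _ _) (fun e he => ?_) fun e he => ?_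
  · rw [BSMsold_update_last Dem N r i hℓ]
    exact (Finset.mem_filter.1 he).2.1.1
  · rw [BSMprice_update_last]
    exact (Finset.mem_filter.1 he).2.1.2.le

end Coupling

section OrderedBidders

variable {ι κ : Type} [Fintype ι] [DecidableEq ι] [LinearOrder κ]
  (Dem : κ → (ι → ℝ) → Finset ι → Finset ι) {b : ℕ → ℝ} {β : ℕ}

theorem isPrefix_filter_BSMgroup_update {N : List κ} (hN : N.Pairwise (· < ·)) (r : κ → ℕ)
    (i : κ) (c ℓ : ℕ) {p : κ → Bool} (hp : ∀ j k, j < k → p k → p j)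
    (hpi : ∀ j, p j → j < i) :
    (BSMgroup (N.filter (· ≠ i)) r ℓ).filter p <+: BSMgroup N (Function.update r i c) ℓ := by
  rw [← BSMgroup_update_filter N r i c ℓ fun j hj => (hpi j hj).ne]
  exact (hN.filter _).filter_isPrefix hp

theorem priceOf_Dset_le_BSMrev (hb : ∀ j < 2 ^ β, 0 ≤ b j) {N : List κ}
    (hN : N.Pairwise (· < ·)) (r : κ → ℕ) (i : κ) (q : ι → ℝ) (S : Finset ι) :
    priceOf q (Dset Dem (N.filter (· ≠ i)) r b β q S (· < i))
      ≤ BSMrev Dem N (Function.update r i β) b β S β := by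
  refine priceOf_le_BSMrev Dem hb (fun e he => ?_) (fun e he => ?_) fun e he => ?_
  · exact (Finset.mem_filter.1 (Finset.mem_filter.1 he).1).1
  · unfold BSMsold
    rw [BSMprice_update_last]
    refine FPAsold_subset_of_isPrefix _ (isPrefix_filter_BSMgroup_update hN r i β β ?_ ?_) _
      (Finset.mem_filter.1 he).2
    · simp only [decide_eq_true_eq]
      exact fun j k hjk hk => hjk.trans hk
    · simp
  · rw [BSMprice_update_last]
    exact (Finset.mem_filter.1 (Finset.mem_filter.1 he).1).2.ge

theorem priceOf_Tset_le_sum_BSMrev (hb : ∀ j < 2 ^ β, 0 ≤ b j) {N : List κ}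
    (hN : N.Pairwise (· < ·)) (r : κ → ℕ) (i : κ) {q : ι → ℝ} {S : Finset ι}
    (hq : ∀ e ∈ S, 0 ≤ q e) :
    priceOf q (Tset Dem (N.filter (· ≠ i)) r b β q S (· < i))
      ≤ ∑ ℓ ∈ Finset.range (β + 1), BSMrev Dem N (Function.update r i β) b β S ℓ := by
  set O := Oset Dem (N.filter (· ≠ i)) r b β q S
  set D := Dset Dem (N.filter (· ≠ i)) r b β q S (· < i)
  have hO : ∀ e ∈ (Finset.range β).biUnion O, e ∈ S := by
    simp only [Finset.mem_biUnion]
    exact fun e ⟨_, _, he⟩ => (Finset.mem_filter.1 he).1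
  have hD : ∀ e ∈ D, e ∈ S := fun e he => (Finset.mem_filter.1 (Finset.mem_filter.1 he).1).1
  rw [Finset.sum_range_succ]
  calc priceOf q ((Finset.range β).biUnion O ∪ D)
      ≤ priceOf q ((Finset.range β).biUnion O) + priceOf q D :=
        priceOf_union_le fun e he => hq e (hD e (Finset.mem_inter.1 he).2)
    _ ≤ ∑ ℓ ∈ Finset.range β, priceOf q (O ℓ) + priceOf q D := by
        gcongr
        exact priceOf_biUnion_le fun e he => hq e (hO e he)
    _ ≤ _ := add_le_add
        (Finset.sum_le_sum fun ℓ hℓ =>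
          priceOf_Oset_le_BSMrev Dem hb N r i q S (Finset.mem_range.1 hℓ))
        (priceOf_Dset_le_BSMrev Dem hb hN r i q S)

end OrderedBidders

theorem claim_revenue_lower_bound_general
    {ι : Type} [Fintype ι] [DecidableEq ι] (n β : ℕ)
    (Dem : Fin n → (ι → ℝ) → Finset ι → Finset ι)
    (b : ℕ → ℝ) (q : ι → ℝ) (Sstar : Finset ι) (i₀ : Fin n)
    (rminus : Fin n → Fin (β + 1))
    (hbnn : ∀ j < 2 ^ β, 0 ≤ b j)
    (hq : ∀ e ∈ Sstar, ∃ j < 2 ^ β, b j = q e) :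
    (((β : ℝ) + 1) ^ 2)⁻¹ *
        ∑ ri : Fin (β + 1), ∑ rs : Fin (β + 1),
          BSMrev Dem (List.finRange n)
            (fun j => ((Function.update rminus i₀ ri) j : ℕ)) b β Sstar (rs : ℕ)
      ≥ (((β : ℝ) + 1) ^ 2)⁻¹ *
          priceOf q (Tset Dem ((List.finRange n).filter fun j => j ≠ i₀)
            (fun j => (rminus j : ℕ)) b β q Sstar (fun j => j < i₀)) := by
  have hq0 : ∀ e ∈ Sstar, 0 ≤ q e := fun e he => by
    obtain ⟨j, hj, hbj⟩ := hq e he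
    exact hbj ▸ hbnn j hj
  have hlast : (fun j => ((Function.update rminus i₀ (Fin.last β)) j : ℕ))
      = Function.update (fun j => (rminus j : ℕ)) i₀ β := by
    funext j
    rw [Function.apply_update (fun _ => Fin.val), Fin.val_last]
  rw [ge_iff_le]
  gcongr
  refine le_trans ?_ (Finset.single_le_sum (fun _ _ => Finset.sum_nonneg fun _ _ =>
    BSMrev_nonneg Dem hbnn _ _ Sstar _) (Finset.mem_univ (Fin.last β)))
  rw [hlast, Fin.sum_univ_eq_sum_range (fun ℓ => BSMrev Dem _ _ b β Sstar ℓ)]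
  exact priceOf_Tset_le_sum_BSMrev Dem hbnn (List.pairwise_lt_finRange n) _ i₀ hq0

/-- **Claim 4.2** (revenue lower bound).  Items are the elements of `ι` (`M = univ`);
bidders are `0, …, n-1` in this order with valuations `v i` and demand oracles `Dem i p`;
`b 0 < ⋯ < b (2^β - 1)` is the enlarged nonnegative candidate price set `B'`; `q e ∈ B'`
are arbitrary intended prices for the items `e ∈ Sstar`.  The sets `C, O_ℓ, U_ℓ, D, T`
are defined from the run of `BinarySearchMechanism(N \ {i₀}, M, ψ)` with the fixed rounds
`rminus` (bidder list `(finRange n).filter (· ≠ i₀)`), `D` using the bidders preceding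
`i₀`.  Then, in the actual mechanism (with bidder `i₀` included, i.e. with round
assignment `Function.update rminus i₀ ri`), the expectation over `r_{i₀}` and `r*` of the
revenue obtained from `Sstar` in the fixed price auction producing the final allocation
is at least `q(T)/(β+1)²`. -/
theorem claim_revenue_lower_bound
    {ι : Type} [Fintype ι] [DecidableEq ι] (n β : ℕ) (ψ : ℝ)
    (v : Fin n → Finset ι → ℝ)
    (Dem : Fin n → (ι → ℝ) → Finset ι → Finset ι)
    (b : ℕ → ℝ) (q : ι → ℝ) (Sstar : Finset ι) (i₀ : Fin n)
    (rminus : Fin n → Fin (β + 1))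
    (hm : 2 ≤ Fintype.card ι)
    (hval : ∀ i, IsValuation (v i))
    (hψpos : 0 < ψ)
    (hβ : 1 ≤ β)
    (hbmono : ∀ j k : ℕ, j < k → k < 2 ^ β → b j < b k)
    (hbnn : ∀ j < 2 ^ β, 0 ≤ b j)
    (hbB : ∀ x ∈ candB (Fintype.card ι) ψ, ∃ j < 2 ^ β, b j = x)
    (hq : ∀ e ∈ Sstar, ∃ j < 2 ^ β, b j = q e)
    (hDem : ∀ i p, IsDemandOracle (v i) p (Dem i p)) :
    (((β : ℝ) + 1) ^ 2)⁻¹ *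
        ∑ ri : Fin (β + 1), ∑ rs : Fin (β + 1),
          BSMrev Dem (List.finRange n)
            (fun j => ((Function.update rminus i₀ ri) j : ℕ)) b β Sstar (rs : ℕ)
      ≥ (((β : ℝ) + 1) ^ 2)⁻¹ *
          priceOf q (Tset Dem ((List.finRange n).filter fun j => j ≠ i₀)
            (fun j => (rminus j : ℕ)) b β q Sstar (fun j => j < i₀)) :=
  claim_revenue_lower_bound_general n β Dem b q Sstar i₀ rminus hbnn hq
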